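/- If the Fraser product ⊻_α L_α has the covering property, then every L_α has the covering property; conversely, if each L_α has the covering property and at most one L_β is not a power set, then ⊻_α L_α has the covering property. Moreover, if every L_α not equal to the power set contains MO₄ (four atoms p,q,r,s with p ∨ q covering all four), then ⊻_α L_α having the covering property forces at most one L_β to not be a power set. -/

import Mathlib

open Set

/-- A simple closure space on `σ`: a family of subsets closed under arbitrary
intersections (the empty intersection giving `univ`), containing `∅` and all singletons. -/
def IsSCS {σ : Type*} (L : Set (Set σ)) : Prop :=
  (∀ ω ⊆ L, ⋂₀ ω ∈ L) ∧ (∅ : Set σ) ∈ L ∧ ∀ p : σ, {p} ∈ L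

/-- The join of a subset `A` of atoms/points in a simple closure space `L`. -/
def sJoin {σ : Type*} (L : Set (Set σ)) (A : Set σ) : Set σ := ⋂₀ {b ∈ L | A ⊆ b}

/-- `b` covers `a` in `L`. -/
def CoversIn {σ : Type*} (L : Set (Set σ)) (a b : Set σ) : Prop :=
  a ⊂ b ∧ ∀ c ∈ L, a ⊆ c → c ⊆ b → c = a ∨ c = b

/-- `x` is a coatom of `L`. -/
def IsCoatomOf {σ : Type*} (L : Set (Set σ)) (x : Set σ) : Prop :=
  x ∈ L ∧ x ≠ univ ∧ ∀ c ∈ L, x ⊆ c → c = x ∨ c = univ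

/-- `L` is coatomistic: every element is a meet of coatoms. -/
def Coatomistic {σ : Type*} (L : Set (Set σ)) : Prop :=
  ∀ a ∈ L, a = ⋂₀ {x | IsCoatomOf L x ∧ a ⊆ x}

/-- Covering property: for any atom `p` and `a ∈ L` with `p ∧ a = 0`,
`p ∨ a` covers `a`. -/
def HasCovProp {σ : Type*} (L : Set (Set σ)) : Prop :=
  ∀ p : σ, ∀ a ∈ L, p ∉ a → CoversIn L a (sJoin L (insert p a))

/-- Covering property of the dual lattice of `L`. -/
def HasDualCovProp {σ : Type*} (L : Set (Set σ)) : Prop :=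
  ∀ x, IsCoatomOf L x → ∀ a ∈ L, sJoin L (x ∪ a) = univ → CoversIn L (x ∩ a) a

/-- `f` is an orthocomplementation of `L`: an order-reversing involution with
`a ∨ f a = 1` for all `a ∈ L`. -/
def IsOrthoOn {σ : Type*} (L : Set (Set σ)) (f : Set σ → Set σ) : Prop :=
  (∀ a ∈ L, f a ∈ L) ∧ (∀ a ∈ L, f (f a) = a) ∧
  (∀ a ∈ L, ∀ b ∈ L, a ⊆ b → f b ⊆ f a) ∧
  (∀ a ∈ L, ∀ b ∈ L, a ∪ f a ⊆ b → b = univ)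

/-- The permutation `g` of the points induces an automorphism of `L`. -/
def IsAutoOn {σ : Type*} (L : Set (Set σ)) (g : Equiv.Perm σ) : Prop :=
  ∀ a, a ∈ L ↔ g '' a ∈ L

/-- `L` contains `MO₃`: three distinct atoms `p, q, r` such that `p ∨ q`
covers each of them. -/
def ContainsMO3 {σ : Type*} (L : Set (Set σ)) : Prop :=
  ∃ p q r : σ, p ≠ q ∧ p ≠ r ∧ q ≠ r ∧
    CoversIn L {p} (sJoin L {p, q}) ∧ CoversIn L {q} (sJoin L {p, q}) ∧
    CoversIn L {r} (sJoin L {p, q})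

/-- `L` contains `MO₄`: four distinct atoms `p, q, r, s` such that `p ∨ q`
covers each of them. -/
def ContainsMO4 {σ : Type*} (L : Set (Set σ)) : Prop :=
  ∃ p q r s : σ, p ≠ q ∧ p ≠ r ∧ p ≠ s ∧ q ≠ r ∧ q ≠ s ∧ r ≠ s ∧
    CoversIn L {p} (sJoin L {p, q}) ∧ CoversIn L {q} (sJoin L {p, q}) ∧
    CoversIn L {r} (sJoin L {p, q}) ∧ CoversIn L {s} (sJoin L {p, q})

/-- A connected covering of the point set of `L`. -/
def IsConnCover {σ : Type*} (L : Set (Set σ)) (𝒜 : Set (Set σ)) : Prop :=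
  ⋃₀ 𝒜 = Set.univ ∧
  (∀ A ∈ 𝒜, ∃ p q : σ, p ∈ A ∧ q ∈ A ∧ p ≠ q) ∧
  (∀ A ∈ 𝒜, ∀ p ∈ A, ∀ q ∈ A, p ≠ q → ∃ r, r ∈ sJoin L {p, q} ∧ r ≠ p ∧ r ≠ q) ∧
  (∀ p q : σ, ∃ n : ℕ, ∃ c : Fin (n + 1) → Set σ, (∀ i, c i ∈ 𝒜) ∧
    p ∈ c 0 ∧ q ∈ c (Fin.last n) ∧
    ∀ i : Fin n, ∃ x y : σ, x ≠ y ∧ (x ∈ c i.castSucc ∧ x ∈ c i.succ) ∧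
      (y ∈ c i.castSucc ∧ y ∈ c i.succ))

/-- `L` is weakly connected: `L ≠ 2` and there is a connected covering. -/
def WeaklyConnected {σ : Type*} (L : Set (Set σ)) : Prop :=
  (∃ p q : σ, p ≠ q) ∧ ∃ 𝒜, IsConnCover L 𝒜

/-- Restriction of `L` to the subset `e`, as a family of subsets of `↥e`. -/
def restrictCS {σ : Type*} (L : Set (Set σ)) (e : Set σ) : Set (Set e) :=
  {B | ∃ a ∈ L, a ⊆ e ∧ B = Subtype.val ⁻¹' a}

/-- Center of an orthocomplemented simple closure space: elements whose
orthocomplement is the set complement. -/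
def centerOf {σ : Type*} (L : Set (Set σ)) (f : Set σ → Set σ) : Set (Set σ) :=
  {a ∈ L | f a = aᶜ}

/-- Central cover of a point `p`. -/
def centralCover {σ : Type*} (L : Set (Set σ)) (f : Set σ → Set σ) (p : σ) : Set σ :=
  ⋂₀ {a ∈ centerOf L f | p ∈ a}

section Family

variable {Ω : Type*} {X : Ω → Type*}

/-- `⋃_α π_α⁻¹ (a α)`. -/
def cylUnion (a : ∀ α, Set (X α)) : Set (∀ α, X α) := {p | ∃ α, p α ∈ a α}

/-- `p[B, β]`: the point `p` with its `β`-th coordinate varying over `B`. -/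
def pSub (p : ∀ α, X α) (β : Ω) (B : Set (X β)) : Set (∀ α, X α) :=
  {q | q β ∈ B ∧ ∀ α, α ≠ β → q α = p α}

/-- The section `R_β[p]` of `R ⊆ ∏_α X α`. -/
def sect (R : Set (∀ α, X α)) (β : Ω) (p : ∀ α, X α) : Set (X β) :=
  {q | ∃ r ∈ R, r β = q ∧ ∀ α, α ≠ β → r α = p α}

/-- The box product `⊼_α L_α`: all nonempty intersections of the sets
`⋃_α π_α⁻¹ (a α)`. -/
def boxProd (L : ∀ α, Set (Set (X α))) : Set (Set (∀ α, X α)) :=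
  {A | ∃ ω ⊆ {B | ∃ a : ∀ α, Set (X α), (∀ α, a α ∈ L α) ∧ B = cylUnion a},
    ω.Nonempty ∧ A = ⋂₀ ω}

/-- The Fraser product `⊻_α L_α`: all `R` whose sections all lie in the factors. -/
def fraserProd (L : ∀ α, Set (Set (X α))) : Set (Set (∀ α, X α)) :=
  {R | ∀ β, ∀ p : ∀ α, X α, sect R β p ∈ L β}

/-- `M` is a weak tensor product of the family `L`: axioms P1–P3. -/
def IsWTP (L : ∀ α, Set (Set (X α))) (M : Set (Set (∀ α, X α))) : Prop :=
  IsSCS M ∧ (∀ a : ∀ α, Set (X α), (∀ α, a α ∈ L α) → cylUnion a ∈ M) ∧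
  (∀ p : ∀ α, X α, ∀ β, ∀ B : Set (X β), pSub p β B ∈ M → B ∈ L β)

/-- The closure operator `⋁_β R = ⋃_p p[⋁ R_β[p]]`. -/
def vJoin (L : ∀ α, Set (Set (X α))) (β : Ω) (R : Set (∀ α, X α)) : Set (∀ α, X α) :=
  ⋃ p : ∀ α, X α, pSub p β (sJoin (L β) (sect R β p))

/-- The orthocomplementation `#` induced on the box product by
orthocomplementations of the factors. -/
def sharp (f : ∀ α, Set (X α) → Set (X α)) (a : Set (∀ α, X α)) : Set (∀ α, X α) :=
  {p | ∀ q ∈ a, ∃ α, p α ∈ f α {q α}}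

end Family

section Binary

variable {X₁ X₂ : Type*}

/-- `a₁ × Σ₂ ∪ Σ₁ × a₂`. -/
def cylUnion₂ (a₁ : Set X₁) (a₂ : Set X₂) : Set (X₁ × X₂) := {p | p.1 ∈ a₁ ∨ p.2 ∈ a₂}

/-- Binary box product. -/
def boxProd₂ (L₁ : Set (Set X₁)) (L₂ : Set (Set X₂)) : Set (Set (X₁ × X₂)) :=
  {A | ∃ ω ⊆ {B | ∃ a₁ ∈ L₁, ∃ a₂ ∈ L₂, B = cylUnion₂ a₁ a₂}, ω.Nonempty ∧ A = ⋂₀ ω}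

/-- Binary Fraser product. -/
def fraserProd₂ (L₁ : Set (Set X₁)) (L₂ : Set (Set X₂)) : Set (Set (X₁ × X₂)) :=
  {R | (∀ p₁, {q | (p₁, q) ∈ R} ∈ L₂) ∧ (∀ p₂, {q | (q, p₂) ∈ R} ∈ L₁)}

/-- Binary weak tensor product: axioms P1–P3. -/
def IsWTP₂ (L₁ : Set (Set X₁)) (L₂ : Set (Set X₂)) (M : Set (Set (X₁ × X₂))) : Prop :=
  IsSCS M ∧ (∀ a₁ ∈ L₁, ∀ a₂ ∈ L₂, cylUnion₂ a₁ a₂ ∈ M) ∧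
  (∀ p₁ : X₁, ∀ A₂ : Set X₂, {p₁} ×ˢ A₂ ∈ M → A₂ ∈ L₂) ∧
  (∀ p₂ : X₂, ∀ A₁ : Set X₁, A₁ ×ˢ {p₂} ∈ M → A₁ ∈ L₁)

/-- The simple closure space `MO_Σ`, containing only `∅`, `Σ` and the singletons. -/
def MOspace (X : Type*) : Set (Set X) := {∅, univ} ∪ {A | ∃ p, A = {p}}

end Binary

/-!
Fix a point `t` of the product. The line `update t α '' B` through `t` in direction `α` embeds
`L α` into the Fraser product, and the join of a line is the line of the join, so a covering in
the product restricts to a covering in `L α`.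

If every factor except `L β` is a power set, membership in the Fraser product only constrains
the `β`-lines. Adding a point `P` to `R` then changes only the `β`-line through `P`, and on that
line it is a covering step of `L β`.

Now let `L β` and `L γ` (`β ≠ γ`) both contain `MO₄`, on atoms `p, q, r, s` and `p', q', r', s'`.
Write `(x, y)` for the point with coordinates `x` at `β` and `y` at `γ`. The sets
`A = {(p,p'), (q,q'), (r,r')}` and `C = A ∪ {(s,s')}` meet every line in at most one point, so
they lie in the product. Let `J` be the join of `A` with `(p,q')`. Lines of `J` are closed in
their factor, so `J` contains `p × (p' ∨ q')`, then `(p ∨ q) × q'`, then (`p' ∨ q'` covers `r'`)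
`r × (p' ∨ q')`, then (`p ∨ q` covers `p`) `(p ∨ q) × s'`. So `A ⊂ C ⊂ J`, and `J` does not
cover `A`.
-/

open Function

section ClosureSpace

variable {σ : Type*} {L : Set (Set σ)} {A a b d m : Set σ}

theorem subset_sJoin (L : Set (Set σ)) (A : Set σ) : A ⊆ sJoin L A :=
  fun _ hx => mem_sInter.2 fun _ hb => hb.2 hx

theorem sJoin_subset (hb : b ∈ L) (h : A ⊆ b) : sJoin L A ⊆ b :=
  sInter_subset_of_mem ⟨hb, h⟩

theorem sJoin_eq_of_isLeast (h : IsLeast {b ∈ L | A ⊆ b} a) : sJoin L A = a :=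
  h.isGLB.sInf_eq

theorem IsSCS.sJoin_mem (hL : IsSCS L) (A : Set σ) : sJoin L A ∈ L :=
  hL.1 _ fun _ hb => hb.1

theorem IsSCS.inter_mem (hL : IsSCS L) (ha : a ∈ L) (hb : b ∈ L) : a ∩ b ∈ L := by
  simpa using hL.1 {a, b} (by rintro x (rfl | rfl) <;> assumption)

theorem IsSCS.mem_of_subsingleton (hL : IsSCS L) (ha : a.Subsingleton) : a ∈ L := by
  rcases ha.eq_empty_or_singleton with rfl | ⟨x, rfl⟩
  exacts [hL.2.1, hL.2.2 x]

theorem CoversIn.subset_of_mem (hL : IsSCS L) {x y : σ} (hcov : CoversIn L {x} m)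
    (hm : m ∈ L) (hd : d ∈ L) (hxd : x ∈ d) (hyd : y ∈ d) (hym : y ∈ m) (hyx : y ≠ x) :
    m ⊆ d := by
  rcases hcov.2 (d ∩ m) (hL.inter_mem hd hm)
    (singleton_subset_iff.2 ⟨hxd, hcov.1.subset rfl⟩) inter_subset_right with h | h
  · exact absurd (h ▸ ⟨hyd, hym⟩ : y ∈ ({x} : Set σ)) hyx
  · rw [← h]
    exact inter_subset_left

theorem CoversIn.of_image {τ : Type*} {M : Set (Set τ)} {g : σ → τ} (hg : Injective g)
    (hLM : ∀ c ∈ L, g '' c ∈ M) (h : CoversIn M (g '' a) (g '' b)) : CoversIn L a b :=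
  ⟨(hg.injOn.image_ssubset_image_iff (subset_univ a) (subset_univ b)).1 h.1, fun c hc hac hcb =>
    (h.2 _ (hLM c hc) (image_mono hac) (image_mono hcb)).imp
      (fun e => image_injective.2 hg e) (fun e => image_injective.2 hg e)⟩

end ClosureSpace

section FraserProduct

variable {Ω : Type*} [DecidableEq Ω] {X : Ω → Type*} {L : ∀ α, Set (Set (X α))}
  {R S : Set (∀ α, X α)}

theorem sect_eq_preimage (R : Set (∀ α, X α)) (β : Ω) (p : ∀ α, X α) :
    sect R β p = update p β ⁻¹' R := by
  ext q
  refine ⟨?_, fun h => ⟨_, h, update_self .., fun α hα => update_of_ne hα ..⟩⟩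
  rintro ⟨r, hr, rfl, hoff⟩
  rwa [mem_preimage, update_eq_iff.2 ⟨rfl, fun α hα => (hoff α hα).symm⟩]

theorem mem_fraserProd : R ∈ fraserProd L ↔ ∀ β p, update p β ⁻¹' R ∈ L β := by
  simp only [fraserProd, sect_eq_preimage, mem_ofPred_eq]

theorem update_eq_update_of_eq {p t : ∀ α, X α} {β : Ω} {u v : X β}
    (h : update p β u = update t β v) : update p β = update t β := by
  funext w δ
  rcases eq_or_ne δ β with rfl | hδ
  · simp
  · simpa [update_of_ne hδ] using congrFun h δ

theorem preimage_update_image_update_of_ne {p t : ∀ α, X α} {β : Ω} (B : Set (X β))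
    (h : update p β ≠ update t β) : update p β ⁻¹' (update t β '' B) = ∅ :=
  eq_empty_of_forall_notMem fun _ ⟨_, _, hv⟩ => h (update_eq_update_of_eq hv.symm)

theorem mem_fraserProd_of_agree_imp_eq (hL : ∀ α, IsSCS (L α))
    (hS : ∀ β, ∀ x ∈ S, ∀ y ∈ S, (∀ α ≠ β, x α = y α) → x = y) : S ∈ fraserProd L :=
  mem_fraserProd.2 fun β p => (hL β).mem_of_subsingleton fun u hu v hv =>
    update_injective p β <| hS β _ hu _ hv fun α hα => by simp [update_of_ne hα]

theorem mem_fraserProd_of_injOn (hL : ∀ α, IsSCS (L α)) {β γ : Ω} (hβγ : β ≠ γ)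
    (hβ : InjOn (· β) S) (hγ : InjOn (· γ) S) : S ∈ fraserProd L := by
  refine mem_fraserProd_of_agree_imp_eq hL fun δ x hx y hy hxy => ?_
  rcases eq_or_ne δ β with rfl | hδ
  · exact hγ hx hy (hxy γ hβγ.symm)
  · exact hβ hx hy (hxy β hδ.symm)

theorem IsSCS.fraserProd (hL : ∀ α, IsSCS (L α)) : IsSCS (fraserProd L) := by
  refine ⟨fun ω hω => mem_fraserProd.2 fun β p => ?_,
    mem_fraserProd_of_agree_imp_eq hL fun _ _ h => h.elim,
    fun x => mem_fraserProd_of_agree_imp_eq hL fun _ _ hx _ hy _ => hx.trans hy.symm⟩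
  rw [preimage_sInter, ← sInter_image]
  exact (hL β).1 _ (by rintro _ ⟨R, hR, rfl⟩; exact mem_fraserProd.1 (hω hR) β p)

theorem image_update_mem_fraserProd (hL : ∀ α, IsSCS (L α)) {β : Ω} {B : Set (X β)}
    (hB : B ∈ L β) (t : ∀ α, X α) : update t β '' B ∈ fraserProd L := by
  refine mem_fraserProd.2 fun γ p => ?_
  rcases eq_or_ne γ β with rfl | hγβ
  · by_cases h : update p γ = update t γ
    · rwa [h, preimage_image_eq _ (update_injective t γ)]
    · rw [preimage_update_image_update_of_ne B h]
      exact (hL γ).2.1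
  · refine (hL γ).mem_of_subsingleton ((subsingleton_singleton (a := t γ)).anti ?_)
    rintro u ⟨b, -, hb⟩
    simpa [update_of_ne hγβ] using (congrFun hb γ).symm

theorem sJoin_fraserProd_image_update (hL : ∀ α, IsSCS (L α)) (t : ∀ α, X α) (β : Ω)
    (B : Set (X β)) :
    sJoin (fraserProd L) (update t β '' B) = update t β '' sJoin (L β) B := by
  refine sJoin_eq_of_isLeast ⟨⟨image_update_mem_fraserProd hL ((hL β).sJoin_mem B) t,
    image_mono (subset_sJoin _ _)⟩, ?_⟩
  rintro T ⟨hT, hBT⟩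
  rw [image_subset_iff] at hBT ⊢
  exact sJoin_subset (mem_fraserProd.1 hT β t) hBT

theorem HasCovProp.of_fraserProd [∀ α, Nonempty (X α)] (hL : ∀ α, IsSCS (L α))
    (h : HasCovProp (fraserProd L)) (α : Ω) : HasCovProp (L α) := by
  intro q a ha hq
  let t : ∀ α, X α := fun _ => Classical.arbitrary _
  have hcov := h (update t α q) (update t α '' a) (image_update_mem_fraserProd hL ha t)
    ((update_injective t α).mem_set_image.not.2 hq)
  rw [← image_insert_eq, sJoin_fraserProd_image_update hL] at hcov
  exact hcov.of_image (update_injective t α) fun c hc => image_update_mem_fraserProd hL hc t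

section OneNontrivialFactor

variable {β : Ω} (hLβ : IsSCS (L β)) (huniv : ∀ α ≠ β, L α = univ)
include hLβ huniv

theorem sJoin_fraserProd_insert_of_eq_univ (hR : R ∈ fraserProd L) (P : ∀ α, X α) :
    sJoin (fraserProd L) (insert P R) =
      R ∪ update P β '' sJoin (L β) (insert (P β) (update P β ⁻¹' R)) := by
  set c := sJoin (L β) (insert (P β) (update P β ⁻¹' R))
  have hsc : update P β ⁻¹' R ⊆ c := (subset_insert _ _).trans (subset_sJoin _ _)
  refine sJoin_eq_of_isLeast ⟨⟨mem_fraserProd.2 fun α p => ?_, ?_⟩, ?_⟩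
  · rcases eq_or_ne α β with rfl | hα
    · by_cases h : update p α = update P α
      · rw [h, preimage_union, preimage_image_eq _ (update_injective P α), union_eq_right.2 hsc]
        exact hLβ.sJoin_mem _
      · rw [preimage_union, preimage_update_image_update_of_ne c h, union_empty]
        exact mem_fraserProd.1 hR α p
    · rw [huniv α hα]
      trivial
  · exact insert_subset (Or.inr ⟨P β, subset_sJoin _ _ (mem_insert _ _), update_eq_self _ _⟩)
      subset_union_left
  · rintro T ⟨hT, hPRT⟩
    rw [insert_subset_iff] at hPRT
    refine union_subset hPRT.2 (image_subset_iff.2 (sJoin_subset (mem_fraserProd.1 hT β P)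
      (insert_subset ?_ (preimage_mono hPRT.2))))
    rw [mem_preimage, update_eq_self]
    exact hPRT.1

theorem hasCovProp_fraserProd_of_eq_univ (hcov : HasCovProp (L β)) :
    HasCovProp (fraserProd L) := by
  intro P R hR hPR
  rw [sJoin_fraserProd_insert_of_eq_univ hLβ huniv hR]
  set s := update P β ⁻¹' R
  set c := sJoin (L β) (insert (P β) s)
  have hsc : CoversIn (L β) s c := hcov (P β) s (mem_fraserProd.1 hR β P)
    (by rwa [mem_preimage, update_eq_self])
  refine ⟨(ssubset_iff_of_subset subset_union_left).2
    ⟨P, Or.inr ⟨P β, subset_sJoin _ _ (mem_insert _ _), update_eq_self _ _⟩, hPR⟩,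
    fun T hT hRT hTS => ?_⟩
  rcases hsc.2 (update P β ⁻¹' T ∩ c) (hLβ.inter_mem (mem_fraserProd.1 hT β P)
      (hLβ.sJoin_mem _)) (subset_inter (preimage_mono hRT) hsc.1.subset)
      inter_subset_right with h | h
  · refine .inl (subset_antisymm (fun x hx => ?_) hRT)
    rcases hTS hx with hxR | ⟨u, hu, rfl⟩
    · exact hxR
    · exact (h ▸ ⟨hx, hu⟩ : u ∈ s)
  · refine .inr (subset_antisymm hTS (union_subset hRT (image_subset_iff.2 ?_)))
    rw [← h]
    exact inter_subset_left

end OneNontrivialFactor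

def update₂ (t : ∀ α, X α) (β γ : Ω) (x : X β) (y : X γ) : ∀ α, X α :=
  update (update t β x) γ y

section update₂

variable (t : ∀ α, X α) {β γ : Ω} (hβγ : β ≠ γ)
include hβγ

theorem update₂_apply_left (x : X β) (y : X γ) : update₂ t β γ x y β = x := by
  rw [update₂, update_of_ne hβγ, update_self]

omit hβγ in
theorem update₂_apply_right (x : X β) (y : X γ) : update₂ t β γ x y γ = y :=
  update_self ..

theorem update₂_inj {x x' : X β} {y y' : X γ} :
    update₂ t β γ x y = update₂ t β γ x' y' ↔ x = x' ∧ y = y' := by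
  refine ⟨fun h => ⟨?_, ?_⟩, by rintro ⟨rfl, rfl⟩; rfl⟩
  · simpa only [update₂_apply_left t hβγ] using congrFun h β
  · simpa only [update₂_apply_right t] using congrFun h γ

theorem update_update₂_left (x : X β) (y : X γ) :
    update (update₂ t β γ x y) β = (update₂ t β γ · y) := by
  funext x'
  rw [update₂, update_comm hβγ.symm, update_idem, ← update₂]

omit hβγ in
theorem update_update₂_right (x : X β) (y : X γ) :
    update (update₂ t β γ x y) γ = update₂ t β γ x := by
  funext y'
  exact update_idem ..

end update₂

theorem update₂_mem_of_coversIn {β γ : Ω} (hLβ : IsSCS (L β)) (hLγ : IsSCS (L γ))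
    (hβγ : β ≠ γ) (t : ∀ α, X α) {J : Set (∀ α, X α)} (hJ : J ∈ fraserProd L)
    {p q r s : X β} {p' q' r' s' : X γ} (hp : CoversIn (L β) {p} (sJoin (L β) {p, q}))
    (hr : r ∈ sJoin (L β) {p, q}) (hs : s ∈ sJoin (L β) {p, q})
    (hr' : CoversIn (L γ) {r'} (sJoin (L γ) {p', q'})) (hs' : s' ∈ sJoin (L γ) {p', q'})
    (hpr : p ≠ r) (hqr' : q' ≠ r') (hpp' : update₂ t β γ p p' ∈ J)
    (hqq' : update₂ t β γ q q' ∈ J) (hrr' : update₂ t β γ r r' ∈ J)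
    (hpq' : update₂ t β γ p q' ∈ J) : update₂ t β γ s s' ∈ J := by
  have hrow : ∀ x, update₂ t β γ x ⁻¹' J ∈ L γ := fun x => by
    simpa only [update_update₂_right] using mem_fraserProd.1 hJ γ (update₂ t β γ x p')
  have hcol : ∀ y, (update₂ t β γ · y) ⁻¹' J ∈ L β := fun y => by
    simpa only [update_update₂_left _ hβγ] using mem_fraserProd.1 hJ β (update₂ t β γ p y)
  have hrow_p : sJoin (L γ) {p', q'} ⊆ update₂ t β γ p ⁻¹' J :=
    sJoin_subset (hrow p) (pair_subset hpp' hpq')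
  have hcol_q' : sJoin (L β) {p, q} ⊆ (update₂ t β γ · q') ⁻¹' J :=
    sJoin_subset (hcol q') (pair_subset hpq' hqq')
  have hrow_r : sJoin (L γ) {p', q'} ⊆ update₂ t β γ r ⁻¹' J :=
    hr'.subset_of_mem hLγ (hLγ.sJoin_mem _) (hrow r) hrr' (hcol_q' hr)
      (subset_sJoin _ _ (by simp)) hqr'
  have hcol_s' : sJoin (L β) {p, q} ⊆ (update₂ t β γ · s') ⁻¹' J :=
    hp.subset_of_mem hLβ (hLβ.sJoin_mem _) (hcol s') (hrow_p hs') (hrow_r hs') hr hpr.symm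
  exact hcol_s' hs

theorem not_hasCovProp_fraserProd_of_containsMO4 [∀ α, Nonempty (X α)]
    (hL : ∀ α, IsSCS (L α)) {β γ : Ω} (hβγ : β ≠ γ) (hβ : ContainsMO4 (L β))
    (hγ : ContainsMO4 (L γ)) : ¬ HasCovProp (fraserProd L) := by
  obtain ⟨p, q, r, s, hpq, hpr, hps, hqr, hqs, hrs, hp, -, hr, hs⟩ := hβ
  obtain ⟨p', q', r', s', hpq', hpr', hps', hqr', hqs', hrs', -, -, hr', hs'⟩ := hγ
  intro hcov
  let t : ∀ α, X α := fun _ => Classical.arbitrary _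
  set A : Set (∀ α, X α) := {update₂ t β γ p p', update₂ t β γ q q', update₂ t β γ r r'}
  set C := insert (update₂ t β γ s s') A
  have hCβ : InjOn (· β) C := by
    intro x hx y hy hxy
    simp only [C, A, mem_insert_iff, mem_singleton_iff] at hx hy
    rcases hx with rfl | rfl | rfl | rfl <;> rcases hy with rfl | rfl | rfl | rfl <;>
      simp_all [update₂_apply_left _ hβγ]
  have hCγ : InjOn (· γ) C := by
    intro x hx y hy hxy
    simp only [C, A, mem_insert_iff, mem_singleton_iff] at hx hy
    rcases hx with rfl | rfl | rfl | rfl <;> rcases hy with rfl | rfl | rfl | rfl <;>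
      simp_all [update₂_apply_right]
  have hC : C ∈ fraserProd L := mem_fraserProd_of_injOn hL hβγ hCβ hCγ
  have hA : A ∈ fraserProd L :=
    mem_fraserProd_of_injOn hL hβγ (hCβ.mono (subset_insert _ _)) (hCγ.mono (subset_insert _ _))
  have hPA : update₂ t β γ p q' ∉ A := by
    simp [A, update₂_inj _ hβγ, hpq, hpr, hpq'.symm]
  set J := sJoin (fraserProd L) (insert (update₂ t β γ p q') A)
  have hAJ : insert (update₂ t β γ p q') A ⊆ J := subset_sJoin _ _
  have hsJ : update₂ t β γ s s' ∈ J :=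
    update₂_mem_of_coversIn (hL β) (hL γ) hβγ t ((IsSCS.fraserProd hL).sJoin_mem _) hp
      (hr.1.subset rfl) (hs.1.subset rfl) hr' (hs'.1.subset rfl) hpr hqr'
      (hAJ (by simp [A])) (hAJ (by simp [A])) (hAJ (by simp [A])) (hAJ (mem_insert _ _))
  rcases (hcov _ A hA hPA).2 C hC (subset_insert _ _)
      (insert_subset hsJ ((subset_insert _ _).trans hAJ)) with h | h
  · have : update₂ t β γ s s' ∈ A := h ▸ mem_insert _ _
    simp [A, update₂_inj _ hβγ, hps.symm, hqs.symm, hrs.symm] at this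
  · have : update₂ t β γ p q' ∈ C := h ▸ hAJ (mem_insert _ _)
    simp [C, A, update₂_inj _ hβγ, hpq, hpr, hps, hpq'.symm] at this

end FraserProduct

/-- (a) if the Fraser product has the covering property then so does every
factor; (b) if every factor has the covering property and at most one factor is not a
power set, then the Fraser product has the covering property; (c) if every factor that is
not a power set contains `MO₄`, then the Fraser product having the covering property
forces at most one factor to not be a power set. -/
theorem stmt_17 {Ω : Type*} [Nonempty Ω] {X : Ω → Type*} [∀ α, Nonempty (X α)]
    (L : ∀ α, Set (Set (X α))) (hL : ∀ α, IsSCS (L α)) :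
    (HasCovProp (fraserProd L) → ∀ α, HasCovProp (L α)) ∧
    ((∀ α, HasCovProp (L α)) →
      (∀ β γ, L β ≠ Set.univ → L γ ≠ Set.univ → β = γ) →
      HasCovProp (fraserProd L)) ∧
    ((∀ α, L α ≠ Set.univ → ContainsMO4 (L α)) → HasCovProp (fraserProd L) →
      ∀ β γ, L β ≠ Set.univ → L γ ≠ Set.univ → β = γ) := by
  classical
  refine ⟨fun h => h.of_fraserProd hL, fun hcov hone => ?_, fun hMO hcov β γ hβ hγ => ?_⟩
  · obtain ⟨β, hβ⟩ : ∃ β, ∀ α ≠ β, L α = univ := by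
      by_cases h : ∃ β, L β ≠ univ
      · obtain ⟨β, hβ⟩ := h
        exact ⟨β, fun α hα => by_contra fun hα' => hα (hone α β hα' hβ)⟩
      · push Not at h
        exact ⟨Classical.arbitrary Ω, fun α _ => h α⟩
    exact hasCovProp_fraserProd_of_eq_univ (hL β) hβ (hcov β)
  · by_contra hβγ
    exact not_hasCovProp_fraserProd_of_containsMO4 hL hβγ (hMO β hβ) (hMO γ hγ) hcov
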